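/- Let A and B be lattices with zero and let a₀, a₁ ∈ A, b₀, b₁ ∈ B. Then the union (a₀ ⊗ b₀) ∪ (a₁ ⊗ b₁) ∪ ((a₀ ∨ a₁) ⊗ (b₀ ∧ b₁)) ∪ ((a₀ ∧ a₁) ⊗ (b₀ ∨ b₁)) is a bi-ideal of A × B, and it is the smallest bi-ideal containing both a₀ ⊗ b₀ and a₁ ⊗ b₁. -/

import Mathlib

/-- `⊥_{A,B} = (A × {0}) ∪ ({0} × B)`. -/
def biBotSet {α β : Type*} [SemilatticeSup α] [OrderBot α] [SemilatticeSup β] [OrderBot β] :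
    Set (α × β) :=
  {p | p.1 = ⊥ ∨ p.2 = ⊥}

/-- A bi-ideal of `A × B`: a downward-closed subset containing `⊥_{A,B}` and closed under
lateral joins. -/
def IsBiIdeal {α β : Type*} [SemilatticeSup α] [OrderBot α] [SemilatticeSup β] [OrderBot β]
    (I : Set (α × β)) : Prop :=
  (∀ p ∈ I, ∀ q : α × β, q ≤ p → q ∈ I) ∧
    biBotSet ⊆ I ∧
    (∀ p ∈ I, ∀ q ∈ I, (p : α × β).1 = (q : α × β).1 → (p.1, p.2 ⊔ q.2) ∈ I) ∧
    (∀ p ∈ I, ∀ q ∈ I, (p : α × β).2 = (q : α × β).2 → (p.1 ⊔ q.1, p.2) ∈ I)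

/-- The pure tensor `a ⊗ b = ⊥_{A,B} ∪ { ⟨x,y⟩ : x ≤ a, y ≤ b }`. -/
def pureTensor {α β : Type*} [SemilatticeSup α] [OrderBot α] [SemilatticeSup β] [OrderBot β]
    (a : α) (b : β) : Set (α × β) :=
  biBotSet ∪ {p | p.1 ≤ a ∧ p.2 ≤ b}

lemma pureTensor_downward {α β : Type*} [SemilatticeSup α] [OrderBot α] [SemilatticeSup β]
    [OrderBot β] {a : α} {b : β} {p q : α × β} (hp : p ∈ pureTensor a b) (hq : q ≤ p) :
    q ∈ pureTensor a b := by
  rcases hp with hp | hp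
  · rcases hp with h | h
    · exact Or.inl (Or.inl (le_antisymm (h ▸ hq.1) bot_le))
    · exact Or.inl (Or.inr (le_antisymm (h ▸ hq.2) bot_le))
  · exact Or.inr ⟨hq.1.trans hp.1, hq.2.trans hp.2⟩

lemma pureTensor_mono {α β : Type*} [SemilatticeSup α] [OrderBot α] [SemilatticeSup β]
    [OrderBot β] {a a' : α} {b b' : β} (ha : a ≤ a') (hb : b ≤ b') :
    pureTensor a b ⊆ pureTensor a' b' := by
  rintro p (hp | hp)
  · exact Or.inl hp
  · exact Or.inr ⟨hp.1.trans ha, hp.2.trans hb⟩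

/-- The union `(a₀ ⊗ b₀) ∪ (a₁ ⊗ b₁) ∪ ((a₀ ∨ a₁) ⊗ (b₀ ∧ b₁)) ∪ ((a₀ ∧ a₁) ⊗ (b₀ ∨ b₁))`
is a bi-ideal and is the smallest bi-ideal containing `a₀ ⊗ b₀` and `a₁ ⊗ b₁`. -/
theorem stmt8 {α β : Type*} [Lattice α] [OrderBot α] [Lattice β] [OrderBot β]
    (a₀ a₁ : α) (b₀ b₁ : β) :
    IsBiIdeal (pureTensor a₀ b₀ ∪ pureTensor a₁ b₁ ∪
        pureTensor (a₀ ⊔ a₁) (b₀ ⊓ b₁) ∪ pureTensor (a₀ ⊓ a₁) (b₀ ⊔ b₁)) ∧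
      (∀ K : Set (α × β), IsBiIdeal K → pureTensor a₀ b₀ ⊆ K → pureTensor a₁ b₁ ⊆ K →
        pureTensor a₀ b₀ ∪ pureTensor a₁ b₁ ∪
          pureTensor (a₀ ⊔ a₁) (b₀ ⊓ b₁) ∪ pureTensor (a₀ ⊓ a₁) (b₀ ⊔ b₁) ⊆ K) := by
  set U : Set (α × β) := pureTensor a₀ b₀ ∪ pureTensor a₁ b₁ ∪
      pureTensor (a₀ ⊔ a₁) (b₀ ⊓ b₁) ∪ pureTensor (a₀ ⊓ a₁) (b₀ ⊔ b₁) with hU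
  have sT0 : pureTensor a₀ b₀ ⊆ U := fun p hp => Or.inl (Or.inl (Or.inl hp))
  have sT1 : pureTensor a₁ b₁ ⊆ U := fun p hp => Or.inl (Or.inl (Or.inr hp))
  have sT2 : pureTensor (a₀ ⊔ a₁) (b₀ ⊓ b₁) ⊆ U := fun p hp => Or.inl (Or.inr hp)
  have sT3 : pureTensor (a₀ ⊓ a₁) (b₀ ⊔ b₁) ⊆ U := fun p hp => Or.inr hp
  have hbot : biBotSet ⊆ U := fun p hp => sT0 (Or.inl hp)
  -- membership characterization
  have memU : ∀ p : α × β, p ∈ U ↔ p ∈ (biBotSet : Set (α × β)) ∨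
      (p.1 ≤ a₀ ∧ p.2 ≤ b₀) ∨ (p.1 ≤ a₁ ∧ p.2 ≤ b₁) ∨
      (p.1 ≤ a₀ ⊔ a₁ ∧ p.2 ≤ b₀ ⊓ b₁) ∨ (p.1 ≤ a₀ ⊓ a₁ ∧ p.2 ≤ b₀ ⊔ b₁) := by
    intro p
    simp only [hU, pureTensor, Set.mem_union, Set.mem_setOf_eq]
    tauto
  have down : ∀ p ∈ U, ∀ q : α × β, q ≤ p → q ∈ U := by
    rintro p (((hp | hp) | hp) | hp) q hq
    · exact sT0 (pureTensor_downward hp hq)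
    · exact sT1 (pureTensor_downward hp hq)
    · exact sT2 (pureTensor_downward hp hq)
    · exact sT3 (pureTensor_downward hp hq)
  -- helpers for lateral joins
  have key2 : ∀ (x : α) (y y' : β) (A A' : α) (B B' : β), x ≤ A → y ≤ B → x ≤ A' → y' ≤ B' →
      pureTensor (A ⊓ A') (B ⊔ B') ⊆ U → (x, y ⊔ y') ∈ U := fun x y y' A A' B B' hx hy hx' hy' hs =>
    hs (Or.inr ⟨le_inf hx hx', sup_le (hy.trans le_sup_left) (hy'.trans le_sup_right)⟩)
  have key1 : ∀ (x x' : α) (y : β) (A A' : α) (B B' : β), x ≤ A → y ≤ B → x' ≤ A' → y ≤ B' →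
      pureTensor (A ⊔ A') (B ⊓ B') ⊆ U → (x ⊔ x', y) ∈ U := fun x x' y A A' B B' hx hy hx' hy' hs =>
    hs (Or.inr ⟨sup_le (hx.trans le_sup_left) (hx'.trans le_sup_right), le_inf hy hy'⟩)
  refine ⟨⟨down, hbot, ?_, ?_⟩, ?_⟩
  · -- second-coordinate lateral joins
    intro p hp q hq hpq
    rcases (memU p).1 hp with hP | hP | hP | hP | hP
    · rcases hP with h | h
      · exact hbot (Or.inl h)
      · rw [h, bot_sup_eq]
        exact down q hq (p.1, q.2) ⟨le_of_eq hpq, le_rfl⟩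
    · rcases (memU q).1 hq with hq' | hq' | hq' | hq' | hq'
      · rcases hq' with h | h
        · exact hbot (Or.inl (hpq.trans h))
        · rw [h, sup_bot_eq]; exact down p hp (p.1, p.2) le_rfl
      · exact key2 _ _ _ _ _ _ _ hP.1 hP.2 (hpq ▸ hq'.1) hq'.2
          ((pureTensor_mono inf_le_left (sup_le le_rfl le_rfl)).trans sT0)
      · exact key2 _ _ _ _ _ _ _ hP.1 hP.2 (hpq ▸ hq'.1) hq'.2
          ((pureTensor_mono le_rfl le_rfl).trans sT3)
      · exact key2 _ _ _ _ _ _ _ hP.1 hP.2 (hpq ▸ hq'.1) hq'.2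
          ((pureTensor_mono inf_le_left (sup_le le_rfl inf_le_left)).trans sT0)
      · exact key2 _ _ _ _ _ _ _ hP.1 hP.2 (hpq ▸ hq'.1) hq'.2
          ((pureTensor_mono (le_inf (inf_le_right.trans inf_le_left) (inf_le_right.trans inf_le_right))
            (sup_le le_sup_left le_rfl)).trans sT3)
    · rcases (memU q).1 hq with hq' | hq' | hq' | hq' | hq'
      · rcases hq' with h | h
        · exact hbot (Or.inl (hpq.trans h))
        · rw [h, sup_bot_eq]; exact down p hp p le_rfl
      · exact key2 _ _ _ _ _ _ _ hP.1 hP.2 (hpq ▸ hq'.1) hq'.2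
          ((pureTensor_mono (le_inf inf_le_right inf_le_left) (sup_le le_sup_right le_sup_left)).trans sT3)
      · exact key2 _ _ _ _ _ _ _ hP.1 hP.2 (hpq ▸ hq'.1) hq'.2
          ((pureTensor_mono inf_le_left (sup_le le_rfl le_rfl)).trans sT1)
      · exact key2 _ _ _ _ _ _ _ hP.1 hP.2 (hpq ▸ hq'.1) hq'.2
          ((pureTensor_mono inf_le_left (sup_le le_rfl inf_le_right)).trans sT1)
      · exact key2 _ _ _ _ _ _ _ hP.1 hP.2 (hpq ▸ hq'.1) hq'.2
          ((pureTensor_mono (le_inf (inf_le_right.trans inf_le_left) (inf_le_right.trans inf_le_right))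
            (sup_le le_sup_right le_rfl)).trans sT3)
    · rcases (memU q).1 hq with hq' | hq' | hq' | hq' | hq'
      · rcases hq' with h | h
        · exact hbot (Or.inl (hpq.trans h))
        · rw [h, sup_bot_eq]; exact down p hp p le_rfl
      · exact key2 _ _ _ _ _ _ _ hP.1 hP.2 (hpq ▸ hq'.1) hq'.2
          ((pureTensor_mono inf_le_right (sup_le inf_le_left le_rfl)).trans sT0)
      · exact key2 _ _ _ _ _ _ _ hP.1 hP.2 (hpq ▸ hq'.1) hq'.2
          ((pureTensor_mono inf_le_right (sup_le inf_le_right le_rfl)).trans sT1)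
      · exact key2 _ _ _ _ _ _ _ hP.1 hP.2 (hpq ▸ hq'.1) hq'.2
          ((pureTensor_mono inf_le_left (sup_le le_rfl le_rfl)).trans sT2)
      · exact key2 _ _ _ _ _ _ _ hP.1 hP.2 (hpq ▸ hq'.1) hq'.2
          ((pureTensor_mono inf_le_right (sup_le (inf_le_left.trans le_sup_left) le_rfl)).trans sT3)
    · rcases (memU q).1 hq with hq' | hq' | hq' | hq' | hq'
      · rcases hq' with h | h
        · exact hbot (Or.inl (hpq.trans h))
        · rw [h, sup_bot_eq]; exact down p hp p le_rfl
      · exact key2 _ _ _ _ _ _ _ hP.1 hP.2 (hpq ▸ hq'.1) hq'.2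
          ((pureTensor_mono inf_le_left (sup_le le_rfl le_sup_left)).trans sT3)
      · exact key2 _ _ _ _ _ _ _ hP.1 hP.2 (hpq ▸ hq'.1) hq'.2
          ((pureTensor_mono inf_le_left (sup_le le_rfl le_sup_right)).trans sT3)
      · exact key2 _ _ _ _ _ _ _ hP.1 hP.2 (hpq ▸ hq'.1) hq'.2
          ((pureTensor_mono inf_le_left (sup_le le_rfl (inf_le_left.trans le_sup_left))).trans sT3)
      · exact key2 _ _ _ _ _ _ _ hP.1 hP.2 (hpq ▸ hq'.1) hq'.2
          ((pureTensor_mono inf_le_left (sup_le le_rfl le_rfl)).trans sT3)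
  · -- first-coordinate lateral joins
    intro p hp q hq hpq
    rcases (memU p).1 hp with hP | hP | hP | hP | hP
    · rcases hP with h | h
      · rw [h, bot_sup_eq]
        exact down q hq (q.1, p.2) ⟨le_rfl, le_of_eq hpq⟩
      · exact hbot (Or.inr h)
    · rcases (memU q).1 hq with hq' | hq' | hq' | hq' | hq'
      · rcases hq' with h | h
        · rw [h, sup_bot_eq]; exact down p hp p le_rfl
        · exact hbot (Or.inr (hpq.trans h))
      · exact key1 _ _ _ _ _ _ _ hP.1 hP.2 hq'.1 (hpq ▸ hq'.2)
          ((pureTensor_mono (sup_le le_rfl le_rfl) inf_le_left).trans sT0)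
      · exact key1 _ _ _ _ _ _ _ hP.1 hP.2 hq'.1 (hpq ▸ hq'.2)
          ((pureTensor_mono le_rfl le_rfl).trans sT2)
      · exact key1 _ _ _ _ _ _ _ hP.1 hP.2 hq'.1 (hpq ▸ hq'.2)
          ((pureTensor_mono (sup_le le_sup_left le_rfl) inf_le_right).trans sT2)
      · exact key1 _ _ _ _ _ _ _ hP.1 hP.2 hq'.1 (hpq ▸ hq'.2)
          ((pureTensor_mono (sup_le le_rfl inf_le_left) inf_le_left).trans sT0)
    · rcases (memU q).1 hq with hq' | hq' | hq' | hq' | hq'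
      · rcases hq' with h | h
        · rw [h, sup_bot_eq]; exact down p hp p le_rfl
        · exact hbot (Or.inr (hpq.trans h))
      · exact key1 _ _ _ _ _ _ _ hP.1 hP.2 hq'.1 (hpq ▸ hq'.2)
          ((pureTensor_mono (sup_le le_sup_right le_sup_left)
            (le_inf inf_le_right inf_le_left)).trans sT2)
      · exact key1 _ _ _ _ _ _ _ hP.1 hP.2 hq'.1 (hpq ▸ hq'.2)
          ((pureTensor_mono (sup_le le_rfl le_rfl) inf_le_left).trans sT1)
      · exact key1 _ _ _ _ _ _ _ hP.1 hP.2 hq'.1 (hpq ▸ hq'.2)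
          ((pureTensor_mono (sup_le le_sup_right le_rfl) inf_le_right).trans sT2)
      · exact key1 _ _ _ _ _ _ _ hP.1 hP.2 hq'.1 (hpq ▸ hq'.2)
          ((pureTensor_mono (sup_le le_rfl inf_le_right) inf_le_left).trans sT1)
    · rcases (memU q).1 hq with hq' | hq' | hq' | hq' | hq'
      · rcases hq' with h | h
        · rw [h, sup_bot_eq]; exact down p hp p le_rfl
        · exact hbot (Or.inr (hpq.trans h))
      · exact key1 _ _ _ _ _ _ _ hP.1 hP.2 hq'.1 (hpq ▸ hq'.2)
          ((pureTensor_mono (sup_le le_rfl le_sup_left) inf_le_left).trans sT2)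
      · exact key1 _ _ _ _ _ _ _ hP.1 hP.2 hq'.1 (hpq ▸ hq'.2)
          ((pureTensor_mono (sup_le le_rfl le_sup_right) inf_le_left).trans sT2)
      · exact key1 _ _ _ _ _ _ _ hP.1 hP.2 hq'.1 (hpq ▸ hq'.2)
          ((pureTensor_mono (sup_le le_rfl le_rfl) inf_le_left).trans sT2)
      · exact key1 _ _ _ _ _ _ _ hP.1 hP.2 hq'.1 (hpq ▸ hq'.2)
          ((pureTensor_mono (sup_le le_rfl (inf_le_left.trans le_sup_left)) inf_le_left).trans sT2)
    · rcases (memU q).1 hq with hq' | hq' | hq' | hq' | hq'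
      · rcases hq' with h | h
        · rw [h, sup_bot_eq]; exact down p hp p le_rfl
        · exact hbot (Or.inr (hpq.trans h))
      · exact key1 _ _ _ _ _ _ _ hP.1 hP.2 hq'.1 (hpq ▸ hq'.2)
          ((pureTensor_mono (sup_le inf_le_left le_rfl) inf_le_right).trans sT0)
      · exact key1 _ _ _ _ _ _ _ hP.1 hP.2 hq'.1 (hpq ▸ hq'.2)
          ((pureTensor_mono (sup_le inf_le_right le_rfl) inf_le_right).trans sT1)
      · exact key1 _ _ _ _ _ _ _ hP.1 hP.2 hq'.1 (hpq ▸ hq'.2)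
          ((pureTensor_mono (sup_le (inf_le_left.trans le_sup_left) le_rfl) inf_le_right).trans sT2)
      · exact key1 _ _ _ _ _ _ _ hP.1 hP.2 hq'.1 (hpq ▸ hq'.2)
          ((pureTensor_mono (sup_le le_rfl le_rfl) inf_le_left).trans sT3)
  · -- minimality
    rintro K ⟨hKdown, hKbot, hKlat2, hKlat1⟩ h0 h1
    have h2 : (a₀ ⊔ a₁, b₀ ⊓ b₁) ∈ K := by
      have := hKlat1 (a₀, b₀ ⊓ b₁) (h0 (Or.inr ⟨le_rfl, inf_le_left⟩))
        (a₁, b₀ ⊓ b₁) (h1 (Or.inr ⟨le_rfl, inf_le_right⟩)) rfl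
      exact this
    have h3 : (a₀ ⊓ a₁, b₀ ⊔ b₁) ∈ K := by
      have := hKlat2 (a₀ ⊓ a₁, b₀) (h0 (Or.inr ⟨inf_le_left, le_rfl⟩))
        (a₀ ⊓ a₁, b₁) (h1 (Or.inr ⟨inf_le_right, le_rfl⟩)) rfl
      exact this
    rintro p (((hp | hp) | hp) | hp)
    · exact h0 hp
    · exact h1 hp
    · rcases hp with hp | hp
      · exact hKbot hp
      · exact hKdown _ h2 p ⟨hp.1, hp.2⟩
    · rcases hp with hp | hp
      · exact hKbot hp
      · exact hKdown _ h3 p ⟨hp.1, hp.2⟩
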